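/- There are no Gaussian integers x, y, z with xyz ≠ 0 and gcd(x, y, z) a unit such that x^4 - y^4 = (1+i)·z^2. -/

import Mathlib

/-!
Write `π = 1 + i` for the prime of `ℤ[i]` above `2`, and call `a` odd when `π ∤ a`. The odd residue
classes modulo `2` are those of `1` and `i`, so odd squares are `±1` and odd fourth powers are `1`
modulo `4`, while the four units are pairwise incongruent modulo `4`.

In a primitive solution `x` and `y` are odd and coprime, and `z = π ^ k * w` with `w` odd. Both
factors of `(x² - y²) (x² + y²) = π ^ (2k+1) w²` are even, and their sum `2x²` is divisible by `π²`
but not by `π³`; so, after possibly swapping them, they are `π² q₁` and `π ^ (2k-1) q₂` with coprime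
`q₁ q₂ = w²`, hence `q₁ = v₁ a²` and `q₂ = v₂ b²` with units `vᵢ` and coprime odd `a, b`. The
product of the resulting expressions for `x²` and `y²` reads `a⁴ + δ π ^ (4m+2) b⁴ = u (xy)²` with
`δ = ±1`, `u` a unit and `m = k - 2`.

These equations are excluded by descent on `m`. Modulo `4`, a solution forces `m > 0` and `u = ±1`,
so `u = σ²` for a unit `σ`. Splitting `(h - σg²)(h + σg²) = ±π ^ (4m+6) f⁴` in the same way yields
fourth powers `v₁ a⁴, v₂ b⁴`, whose difference gives a solution at level `m - 1`. The new
coefficient of `π ^ (4m+2)` is again `±1`: from `v₁ v₂ (ab)⁴ = ±f⁴` and odd fourth powers being `1`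
modulo `8`, `v₁ v₂ = ±1`.
-/

open Zsqrtd

local notation "ℤ[i]" => GaussianInt

theorem eq_and_eq_of_pow_mul_eq_pow_mul {M : Type*} [CommMonoidWithZero M] [IsCancelMulZero M]
    {p a b : M} {m n : ℕ} (hp : p ≠ 0) (ha : ¬p ∣ a) (hb : ¬p ∣ b) (h : p ^ m * a = p ^ n * b) :
    m = n ∧ a = b := by
  wlog hmn : m ≤ n generalizing m n a b
  · exact (this hb ha h.symm (by omega)).imp Eq.symm Eq.symm
  obtain ⟨k, rfl⟩ := Nat.exists_eq_add_of_le hmn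
  rw [pow_add, mul_assoc, mul_right_inj' (pow_ne_zero m hp)] at h
  cases k with
  | zero => simpa using h
  | succ k => exact absurd (h ▸ (dvd_pow_self p k.succ_ne_zero).mul_right b) ha

namespace GaussianInt

def π : ℤ[i] := 1 + sqrtd

theorem sqrtd_mul_sqrtd : (sqrtd * sqrtd : ℤ[i]) = -1 := by decide

theorem pi_sq : π ^ 2 = 2 * sqrtd := by decide

theorem pi_pow_four : π ^ 4 = -4 := by decide

theorem prime_pi : Prime π := by
  rw [← irreducible_iff_prime]
  refine ⟨by rw [← norm_eq_one_iff]; decide, fun a b hab => ?_⟩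
  have h2 : a.norm.natAbs * b.norm.natAbs = 2 := by
    rw [← Int.natAbs_mul, ← norm_mul, ← hab]; decide
  rw [← norm_eq_one_iff, ← norm_eq_one_iff]
  rcases Nat.prime_two.eq_one_or_self_of_dvd _ ⟨_, h2.symm⟩ with h | h
  · exact .inl h
  · exact .inr (by rw [h] at h2; omega)

theorem pi_dvd_two : π ∣ 2 := ⟨1 - sqrtd, by decide⟩

theorem isUnit_iff {u : ℤ[i]} : IsUnit u ↔ u = 1 ∨ u = -1 ∨ u = sqrtd ∨ u = -sqrtd := by
  constructor
  · intro hu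
    have hnorm : u.re * u.re + u.im * u.im = 1 := by
      have := (norm_eq_one_iff' (by norm_num) u).mpr hu
      rw [norm_def] at this
      linarith
    obtain ⟨r, i⟩ := u
    simp only [Zsqrtd.ext_iff] at hnorm ⊢
    have : -1 ≤ r := by nlinarith
    have : r ≤ 1 := by nlinarith
    have : -1 ≤ i := by nlinarith
    have : i ≤ 1 := by nlinarith
    interval_cases r <;> interval_cases i <;> simp_all
  · rintro (rfl | rfl | rfl | rfl)
    · exact isUnit_one
    · exact isUnit_one.neg
    · exact .of_mul_eq_one (-sqrtd) (by decide)
    · exact .of_mul_eq_one sqrtd (by decide)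

theorem isUnit_sqrtd : IsUnit (sqrtd : ℤ[i]) := isUnit_iff.mpr (.inr (.inr (.inl rfl)))

theorem pow_four_eq_one_of_isUnit {u : ℤ[i]} (hu : IsUnit u) : u ^ 4 = 1 := by
  rcases isUnit_iff.mp hu with rfl | rfl | rfl | rfl <;> decide

theorem four_dvd_iff {z : ℤ[i]} : 4 ∣ z ↔ 4 ∣ z.re ∧ 4 ∣ z.im := by
  simpa using intCast_dvd (d := -1) 4 z

theorem eq_of_four_dvd_sub {u v : ℤ[i]} (hu : IsUnit u) (hv : IsUnit v) (h : 4 ∣ u - v) :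
    u = v := by
  rw [four_dvd_iff] at h
  rcases isUnit_iff.mp hu with rfl | rfl | rfl | rfl <;>
    rcases isUnit_iff.mp hv with rfl | rfl | rfl | rfl <;>
    first | rfl | (revert h; decide)

theorem exists_eq_add_two_mul {a : ℤ[i]} (ha : ¬π ∣ a) :
    ∃ u b, (u = 1 ∨ u = sqrtd) ∧ a = u + 2 * b := by
  have hdecomp : a = ⟨a.re % 2, a.im % 2⟩ + 2 * ⟨a.re / 2, a.im / 2⟩ := by
    ext <;> simp <;> omega
  have hπ2 : π ∣ 2 * ⟨a.re / 2, a.im / 2⟩ := pi_dvd_two.mul_right _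
  rcases Int.emod_two_eq_zero_or_one a.re with hr | hr <;>
    rcases Int.emod_two_eq_zero_or_one a.im with hi | hi <;> rw [hr, hi] at hdecomp
  · exact absurd (hdecomp ▸ dvd_add (dvd_zero π) hπ2) ha
  · exact ⟨_, _, .inr rfl, hdecomp⟩
  · exact ⟨_, _, .inl rfl, hdecomp⟩
  · exact absurd (hdecomp ▸ dvd_add (dvd_refl π) hπ2) ha

theorem pi_dvd_sub_one {a : ℤ[i]} (ha : ¬π ∣ a) : π ∣ a - 1 := by
  obtain ⟨u, b, rfl | rfl, rfl⟩ := exists_eq_add_two_mul ha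
  · simpa using pi_dvd_two.mul_right b
  · simpa [add_sub_right_comm] using
      dvd_add (⟨sqrtd, by decide⟩ : π ∣ sqrtd - 1) (pi_dvd_two.mul_right b)

theorem exists_sq_eq_add_four_mul {a : ℤ[i]} (ha : ¬π ∣ a) :
    ∃ ε c, ε ^ 2 = 1 ∧ a ^ 2 = ε + 4 * c := by
  obtain ⟨u, b, hu, rfl⟩ := exists_eq_add_two_mul ha
  refine ⟨u ^ 2, u * b + b ^ 2, ?_, by ring⟩
  rcases hu with rfl | rfl <;> decide

theorem eight_dvd_pow_four_sub_one {a : ℤ[i]} (ha : ¬π ∣ a) : 8 ∣ a ^ 4 - 1 := by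
  obtain ⟨ε, c, hε, hc⟩ := exists_sq_eq_add_four_mul ha
  exact ⟨ε * c + 2 * c ^ 2, by linear_combination (a ^ 2 + ε + 4 * c) * hc + hε⟩

theorem pi_dvd_sub {a b : ℤ[i]} (ha : ¬π ∣ a) (hb : ¬π ∣ b) : π ∣ a - b := by
  simpa using dvd_sub (pi_dvd_sub_one ha) (pi_dvd_sub_one hb)

theorem pi_dvd_add {a b : ℤ[i]} (ha : ¬π ∣ a) (hb : ¬π ∣ b) : π ∣ a + b := by
  simpa using pi_dvd_sub ha (b := -b) (by rwa [dvd_neg])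

theorem two_mul_eq (a : ℤ[i]) : 2 * a = π ^ 2 * (-sqrtd * a) := by
  linear_combination (sqrtd * a) * pi_sq + 2 * a * sqrtd_mul_sqrtd

theorem _root_.Prime.dvd_of_dvd_pi_pow_mul {p a b : ℤ[i]} {n : ℕ} (hp : Prime p) (ha : ¬π ∣ a)
    (hpa : p ∣ a) (h : p ∣ π ^ n * b) : p ∣ b :=
  (hp.dvd_mul.mp h).resolve_left fun hpπ =>
    ha ((hp.irreducible.dvd_symm prime_pi.irreducible (hp.dvd_of_dvd_pow hpπ)).trans hpa)

theorem eq_two_of_pi_pow_mul_add_pi_pow_mul_eq {e₁ e₂ : ℕ} {q₁ q₂ r : ℤ[i]} (hq₁ : ¬π ∣ q₁)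
    (hq₂ : ¬π ∣ q₂) (hr : ¬π ∣ r) (hle : e₁ ≤ e₂) (h : π ^ e₁ * q₁ + π ^ e₂ * q₂ = π ^ 2 * r) :
    e₁ = 2 ∧ e₁ < e₂ ∨ e₁ = e₂ ∧ e₁ ≤ 1 := by
  rcases hle.lt_or_eq with hlt | rfl
  · obtain ⟨k, rfl⟩ := Nat.exists_eq_add_of_lt hlt
    have hodd : ¬π ∣ q₁ + π ^ (k + 1) * q₂ := fun hd =>
      hq₁ (by simpa using dvd_sub hd ((dvd_pow_self π k.succ_ne_zero).mul_right q₂))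
    exact .inl ⟨(eq_and_eq_of_pow_mul_eq_pow_mul prime_pi.ne_zero hodd hr
      (by rw [← h]; ring)).1, hlt⟩
  · obtain ⟨c, hc⟩ := pi_dvd_add hq₁ hq₂
    have hdvd : π ^ (e₁ + 1) ∣ π ^ 2 * r := ⟨c, by rw [← h, ← mul_add, hc]; ring⟩
    have := (pow_dvd_pow_iff prime_pi.ne_zero prime_pi.not_isUnit).mp
      (prime_pi.pow_dvd_of_dvd_mul_right _ hr hdvd)
    exact .inr ⟨rfl, by omega⟩

theorem isCoprime_of_sub_eq_pi_pow_mul_of_add_eq_pi_pow_mul {s t q₁ q₂ : ℤ[i]} {e₁ e₂ : ℕ}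
    (hst : IsCoprime s t) (hq₁ : ¬π ∣ q₁) (h₁ : s - t = π ^ e₁ * q₁) (h₂ : s + t = π ^ e₂ * q₂) :
    IsCoprime q₁ q₂ := by
  refine isCoprime_of_prime_dvd (fun h0 => hq₁ (h0.1 ▸ dvd_zero π)) fun p hp hp₁ hp₂ => ?_
  have hsub : p ∣ s - t := h₁ ▸ hp₁.mul_left _
  have hadd : p ∣ s + t := h₂ ▸ hp₂.mul_left _
  have hcancel : ∀ a, p ∣ 2 * a → p ∣ a := fun a ha => isUnit_sqrtd.neg.dvd_mul_left.mp
    (hp.dvd_of_dvd_pi_pow_mul hq₁ hp₁ (two_mul_eq a ▸ ha))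
  refine hp.not_isUnit (hst.isUnit_of_dvd' (hcancel s ?_) (hcancel t ?_))
  · convert dvd_add hadd hsub using 1; ring
  · convert dvd_sub hadd hsub using 1; ring

theorem exists_sub_eq_pi_sq_mul_of_mul_eq {s t c : ℤ[i]} {N : ℕ} (hs : ¬π ∣ s) (ht : ¬π ∣ t)
    (hst : IsCoprime s t) (hc : ¬π ∣ c) (hN : N ≠ 2) (h : (s - t) * (s + t) = π ^ N * c) :
    ∃ ε n q₁ q₂, ε ^ 2 = 1 ∧ N = n + 2 ∧ 2 < n ∧ IsCoprime q₁ q₂ ∧ q₁ * q₂ = c ∧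
      s - ε * t = π ^ 2 * q₁ ∧ s + ε * t = π ^ n * q₂ := by
  have hne : (s - t) * (s + t) ≠ 0 :=
    h ▸ mul_ne_zero (pow_ne_zero _ prime_pi.ne_zero) fun hc0 => hc (hc0 ▸ dvd_zero π)
  obtain ⟨e₁, q₁, hq₁, he₁⟩ :=
    WfDvdMonoid.max_power_factor (left_ne_zero_of_mul hne) prime_pi.irreducible
  obtain ⟨e₂, q₂, hq₂, he₂⟩ :=
    WfDvdMonoid.max_power_factor (right_ne_zero_of_mul hne) prime_pi.irreducible
  clear hne
  -- replacing `t` by `-t` swaps the two factors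
  wlog hle : e₁ ≤ e₂ generalizing t e₁ e₂ q₁ q₂
  · obtain ⟨ε, n, q₁', q₂', hε, hrest⟩ := this (t := -t) (by rwa [dvd_neg]) hst.neg_right
      (by rw [← h]; ring) e₂ q₂ hq₂ (by rw [← he₂]; ring) e₁ q₁ hq₁ (by rw [← he₁]; ring)
      (by omega)
    exact ⟨-ε, n, q₁', q₂', by rw [neg_sq, hε], by simpa using hrest⟩
  have hsum : π ^ e₁ * q₁ + π ^ e₂ * q₂ = π ^ 2 * (-sqrtd * s) := by
    rw [← he₁, ← he₂, ← two_mul_eq]; ring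
  have hs' : ¬π ∣ -sqrtd * s := by rwa [isUnit_sqrtd.neg.dvd_mul_left]
  have hodd : ¬π ∣ q₁ * q₂ := fun hd => (prime_pi.dvd_mul.mp hd).elim hq₁ hq₂
  rcases eq_two_of_pi_pow_mul_add_pi_pow_mul_eq hq₁ hq₂ hs' hle hsum with ⟨rfl, hlt⟩ | ⟨rfl, he⟩
  · obtain ⟨hN', hq⟩ := eq_and_eq_of_pow_mul_eq_pow_mul (m := 2 + e₂) prime_pi.ne_zero hodd hc
      (by rw [← h, he₁, he₂]; ring)
    exact ⟨1, e₂, q₁, q₂, one_pow 2, by omega, hlt,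
      isCoprime_of_sub_eq_pi_pow_mul_of_add_eq_pi_pow_mul hst hq₁ he₁ he₂, hq, by simpa, by simpa⟩
  · have hN' := (eq_and_eq_of_pow_mul_eq_pow_mul (m := e₁ + e₁) prime_pi.ne_zero hodd hc
      (by rw [← h, he₁, he₂]; ring)).1
    obtain rfl : e₁ = 0 := by omega
    rw [pow_zero, one_mul] at he₁
    exact absurd (he₁ ▸ pi_dvd_sub hs ht) hq₁

theorem exists_sub_eq_pi_sq_mul_pow_of_mul_eq {s t u w : ℤ[i]} {N k : ℕ} (hs : ¬π ∣ s)
    (ht : ¬π ∣ t) (hst : IsCoprime s t) (hu : IsUnit u) (hw : ¬π ∣ w) (hN : N ≠ 2) (hk : k ≠ 0)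
    (h : (s - t) * (s + t) = π ^ N * (u * w ^ k)) :
    ∃ ε n v₁ v₂ a b, ε ^ 2 = 1 ∧ N = n + 2 ∧ 2 < n ∧ IsUnit v₁ ∧ IsUnit v₂ ∧ ¬π ∣ a ∧ ¬π ∣ b ∧
      IsCoprime a b ∧ v₁ * v₂ * (a * b) ^ k = u * w ^ k ∧
      s - ε * t = π ^ 2 * (v₁ * a ^ k) ∧ s + ε * t = π ^ n * (v₂ * b ^ k) := by
  have hc : ¬π ∣ u * w ^ k := by
    rw [hu.dvd_mul_left]; exact fun hd => hw (prime_pi.dvd_of_dvd_pow hd)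
  obtain ⟨ε, n, q₁, q₂, hε, hN, hn, hq, hqc, h₁, h₂⟩ :=
    exists_sub_eq_pi_sq_mul_of_mul_eq hs ht hst hc hN h
  have hassoc : Associated (w ^ k) (q₁ * q₂) := hqc ▸ (associated_unit_mul_left _ _ hu).symm
  obtain ⟨a, v₁, rfl⟩ := exists_associated_pow_of_associated_pow_mul hq hassoc
  obtain ⟨b, v₂, rfl⟩ :=
    exists_associated_pow_of_associated_pow_mul hq.symm (hassoc.trans (.of_eq (mul_comm _ _)))
  have hprod : v₁ * v₂ * (a * b) ^ k = u * w ^ k := by rw [← hqc]; ring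
  refine ⟨ε, n, v₁, v₂, a, b, hε, hN, hn, v₁.isUnit, v₂.isUnit, fun ha => hc ?_, fun hb => hc ?_,
    ?_, hprod, by rw [h₁]; ring, by rw [h₂]; ring⟩
  · rw [← hprod, mul_pow]; exact ((dvd_pow ha hk).mul_right _).mul_left _
  · rw [← hprod, mul_pow]; exact ((dvd_pow hb hk).mul_left _).mul_left _
  · exact (IsCoprime.pow_iff (Nat.pos_of_ne_zero hk) (Nat.pos_of_ne_zero hk)).mp
      hq.of_mul_left_left.of_mul_right_left

theorem exists_isUnit_sq_eq {u : ℤ[i]} (hu : u ^ 2 = 1) : ∃ σ, IsUnit σ ∧ σ ^ 2 = u := by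
  rcases sq_eq_one_iff.mp hu with rfl | rfl
  · exact ⟨1, isUnit_one, one_pow 2⟩
  · exact ⟨sqrtd, isUnit_sqrtd, by decide⟩

theorem not_four_dvd_one_add_mul_pi_sq_sub {δ v : ℤ[i]} (hδ : δ ^ 2 = 1) (hv : IsUnit v) :
    ¬4 ∣ 1 + δ * π ^ 2 - v := by
  rw [four_dvd_iff]
  rcases sq_eq_one_iff.mp hδ with rfl | rfl <;>
    rcases isUnit_iff.mp hv with rfl | rfl | rfl | rfl <;> decide

theorem eq_of_mul_pow_four_eq_mul_pow_four {v w x y : ℤ[i]} (hv : IsUnit v) (hw : IsUnit w)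
    (hx : ¬π ∣ x) (hy : ¬π ∣ y) (h : v * x ^ 4 = w * y ^ 4) : v = w := by
  obtain ⟨α, hα⟩ := eight_dvd_pow_four_sub_one hx
  obtain ⟨β, hβ⟩ := eight_dvd_pow_four_sub_one hy
  exact eq_of_four_dvd_sub hv hw ⟨2 * (w * β - v * α), by linear_combination h - v * hα + w * hβ⟩

structure QuarticSolution (m : ℕ) (g f h δ u : ℤ[i]) : Prop where
  not_dvd_g : ¬π ∣ g
  not_dvd_f : ¬π ∣ f
  not_dvd_h : ¬π ∣ h
  isCoprime : IsCoprime f g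
  sign_sq : δ ^ 2 = 1
  isUnit : IsUnit u
  eq : g ^ 4 + δ * π ^ (4 * m + 2) * f ^ 4 = u * h ^ 2

namespace QuarticSolution

variable {m : ℕ} {g f h δ u : ℤ[i]}

theorem pos_and_sq_eq_one (S : QuarticSolution m g f h δ u) : 0 < m ∧ u ^ 2 = 1 := by
  obtain ⟨γ, hγ⟩ := eight_dvd_pow_four_sub_one S.not_dvd_g
  obtain ⟨φ, hφ⟩ := eight_dvd_pow_four_sub_one S.not_dvd_f
  obtain ⟨ε, c, hε, hc⟩ := exists_sq_eq_add_four_mul S.not_dvd_h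
  have huε : IsUnit (u * ε) := S.isUnit.mul (IsUnit.of_pow_eq_one hε two_ne_zero)
  have key : 4 ∣ 1 + δ * π ^ (4 * m + 2) - u * ε :=
    ⟨u * c - 2 * γ - 2 * δ * π ^ (4 * m + 2) * φ, by
      linear_combination S.eq - hγ - δ * π ^ (4 * m + 2) * hφ + u * hc⟩
  rcases Nat.eq_zero_or_pos m with rfl | hm
  · exact absurd key (not_four_dvd_one_add_mul_pi_sq_sub S.sign_sq huε)
  have h4 : 4 ∣ π ^ (4 * m + 2) :=
    (Dvd.intro (-1) (by rw [pi_pow_four]; ring)).trans (pow_dvd_pow π (by omega))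
  have h1 : 1 = u * ε := eq_of_four_dvd_sub isUnit_one huε (by
    convert dvd_sub key (h4.mul_left δ) using 1; ring)
  exact ⟨hm, by linear_combination (-u ^ 2) * hε - (u * ε + 1) * h1⟩

theorem isCoprime_h_g (S : QuarticSolution m g f h δ u) : IsCoprime h g := by
  refine isCoprime_of_prime_dvd (fun h0 => S.not_dvd_h (h0.1 ▸ dvd_zero π)) fun p hp hph hpg => ?_
  have hdvd : p ∣ π ^ (4 * m + 2) * (δ * f ^ 4) := by
    have := dvd_sub ((dvd_pow hph two_ne_zero).mul_left u) (dvd_pow hpg four_ne_zero)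
    rwa [← S.eq, add_sub_cancel_left, mul_comm δ, mul_assoc] at this
  have hpf := (IsUnit.of_pow_eq_one S.sign_sq two_ne_zero).dvd_mul_left.mp
    (hp.dvd_of_dvd_pi_pow_mul S.not_dvd_g hpg hdvd)
  exact hp.not_isUnit (S.isCoprime.isUnit_of_dvd' (hp.dvd_of_dvd_pow hpf) hpg)

theorem descend (S : QuarticSolution (m + 1) g f h δ u) :
    ∃ g' f' h' δ' u', QuarticSolution m g' f' h' δ' u' := by
  obtain ⟨σ, hσ, rfl⟩ := exists_isUnit_sq_eq S.pos_and_sq_eq_one.2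
  have hσ4 := pow_four_eq_one_of_isUnit hσ
  have hfac : (h - σ * g ^ 2) * (h + σ * g ^ 2) = π ^ (4 * m + 6) * (σ ^ 2 * δ * f ^ 4) := by
    linear_combination (-σ ^ 2) * S.eq - h ^ 2 * hσ4
  have hg2 : ¬π ∣ σ * g ^ 2 := by
    rw [hσ.dvd_mul_left]; exact fun hd => S.not_dvd_g (prime_pi.dvd_of_dvd_pow hd)
  have hσδ : IsUnit (σ ^ 2 * δ) := (hσ.pow 2).mul (IsUnit.of_pow_eq_one S.sign_sq two_ne_zero)
  have hhg : IsCoprime h (σ * g ^ 2) :=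
    (isCoprime_mul_unit_left_right hσ _ _).mpr S.isCoprime_h_g.pow_right
  obtain ⟨ε, n, v₁, v₂, a, b, hε, hn, -, hv₁, hv₂, ha, hb, hab, hprod, h₁, h₂⟩ :=
    exists_sub_eq_pi_sq_mul_pow_of_mul_eq S.not_dvd_h hg2 hhg hσδ S.not_dvd_f (by omega)
      four_ne_zero hfac
  obtain rfl : n = 4 * m + 4 := by omega
  have hv : v₁ * v₂ = σ ^ 2 * δ := eq_of_mul_pow_four_eq_mul_pow_four (hv₁.mul hv₂) hσδ
    (fun hd => (prime_pi.dvd_mul.mp hd).elim ha hb) S.not_dvd_f hprod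
  have hv₁4 := pow_four_eq_one_of_isUnit hv₁
  refine ⟨a, b, g, -v₁ ^ 3 * v₂, sqrtd * ε * σ * v₁ ^ 3, ha, hb, S.not_dvd_g, hab.symm, ?_,
    ((isUnit_sqrtd.mul (IsUnit.of_pow_eq_one hε two_ne_zero)).mul hσ).mul (hv₁.pow 3), ?_⟩
  · linear_combination (v₁ * v₂) ^ 2 * hv₁4 + (v₁ * v₂ + σ ^ 2 * δ) * hv + δ ^ 2 * hσ4 + S.sign_sq
  · apply mul_left_cancel₀ (pow_ne_zero 2 prime_pi.ne_zero)
    linear_combination v₁ ^ 3 * (h₂ - h₁) - π ^ 2 * a ^ 4 * hv₁4 -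
      ε * σ * v₁ ^ 3 * g ^ 2 * (sqrtd * pi_sq + 2 * sqrtd_mul_sqrtd)

end QuarticSolution

theorem not_quarticSolution : ∀ m g f h δ u, ¬QuarticSolution m g f h δ u
  | 0, _, _, _, _, _, S => Nat.lt_irrefl 0 S.pos_and_sq_eq_one.1
  | m + 1, _, _, _, _, _, S => by
    obtain ⟨g', f', h', δ', u', S'⟩ := S.descend
    exact not_quarticSolution m _ _ _ _ _ S'

theorem pow_four_sub_pow_four_ne_pi_pow_mul_sq {x y w : ℤ[i]} {k : ℕ} (hx : ¬π ∣ x)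
    (hy : ¬π ∣ y) (hw : ¬π ∣ w) (hxy : IsCoprime x y) :
    x ^ 4 - y ^ 4 ≠ π ^ (2 * k + 1) * w ^ 2 := by
  intro h
  have hsq : ∀ {a : ℤ[i]}, ¬π ∣ a → ¬π ∣ a ^ 2 := fun ha hd => ha (prime_pi.dvd_of_dvd_pow hd)
  obtain ⟨ε, n, v₁, v₂, a, b, hε, hn, hn2, hv₁, hv₂, ha, hb, hab, -, h₁, h₂⟩ :=
    exists_sub_eq_pi_sq_mul_pow_of_mul_eq (N := 2 * k + 1) (hsq hx) (hsq hy) hxy.pow isUnit_one hw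
      (by omega) two_ne_zero (by linear_combination h)
  obtain ⟨m, rfl⟩ : ∃ m, n = 2 * m + 3 := ⟨(n - 3) / 2, by omega⟩
  have h4 : 4 * ε * (x * y) ^ 2 =
      (π ^ (2 * m + 3) * (v₂ * b ^ 2)) ^ 2 - (π ^ 2 * (v₁ * a ^ 2)) ^ 2 := by
    linear_combination (x ^ 2 + ε * y ^ 2 + π ^ (2 * m + 3) * (v₂ * b ^ 2)) * h₂ -
      (x ^ 2 - ε * y ^ 2 + π ^ 2 * (v₁ * a ^ 2)) * h₁
  have hv₁4 := pow_four_eq_one_of_isUnit hv₁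
  refine not_quarticSolution m a b (x * y) (-(v₁ ^ 2 * v₂ ^ 2)) (ε * v₁ ^ 2)
    ⟨ha, hb, fun hd => (prime_pi.dvd_mul.mp hd).elim hx hy, hab.symm, ?_,
      (IsUnit.of_pow_eq_one hε two_ne_zero).mul (hv₁.pow 2), ?_⟩
  · linear_combination v₂ ^ 4 * hv₁4 + pow_four_eq_one_of_isUnit hv₂
  · apply mul_left_cancel₀ (pow_ne_zero 4 prime_pi.ne_zero)
    linear_combination v₁ ^ 2 * h4 - π ^ 4 * a ^ 4 * hv₁4 - v₁ ^ 2 * ε * (x * y) ^ 2 * pi_pow_four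

theorem _root_.Prime.dvd_of_pow_four_sub_pow_four_eq {p x y z : ℤ[i]} (hp : Prime p) (hx : p ∣ x)
    (hy : p ∣ y) (h : x ^ 4 - y ^ 4 = π * z ^ 2) : p ∣ z := by
  by_contra hpz
  have hpπ : p ^ 4 ∣ π := hp.pow_dvd_of_dvd_mul_right 4 (fun hd => hpz (hp.dvd_of_dvd_pow hd))
    (h ▸ dvd_sub (pow_dvd_pow_of_dvd hx 4) (pow_dvd_pow_of_dvd hy 4))
  have hπp : π ∣ p :=
    hp.irreducible.dvd_symm prime_pi.irreducible ((dvd_pow_self p four_ne_zero).trans hpπ)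
  have := (pow_dvd_pow_iff prime_pi.ne_zero prime_pi.not_isUnit (n := 4) (m := 1)).mp
    ((pow_dvd_pow_of_dvd hπp 4).trans (by rwa [pow_one]))
  omega

theorem pi_dvd_iff_pi_dvd_of_pow_four_sub_pow_four_eq {x y z : ℤ[i]}
    (h : x ^ 4 - y ^ 4 = π * z ^ 2) : π ∣ x ↔ π ∣ y := by
  have hd : π ∣ x ^ 4 - y ^ 4 := h ▸ dvd_mul_right π _
  rw [← prime_pi.dvd_pow_iff_dvd (a := x) four_ne_zero,
    ← prime_pi.dvd_pow_iff_dvd (a := y) four_ne_zero]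
  exact ⟨fun hx4 => (dvd_sub_right hx4).mp hd, fun hy4 => (dvd_sub_left hy4).mp hd⟩

end GaussianInt

open GaussianInt

/-- The equation `x⁴ - y⁴ = (1+i)·z²` has no nontrivial solutions over the
Gaussian integers. -/
theorem no_nontrivial_solution_x4_sub_y4_eq_one_add_i_z2 :
    ¬ ∃ x y z : GaussianInt, x * y * z ≠ 0 ∧
      (∀ d : GaussianInt, d ∣ x → d ∣ y → d ∣ z → IsUnit d) ∧
      x ^ 4 - y ^ 4 = (1 + sqrtd) * z ^ 2 := by
  rintro ⟨x, y, z, hxyz, hgcd, h⟩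
  change x ^ 4 - y ^ 4 = π * z ^ 2 at h
  have hcommon : ∀ p, Prime p → p ∣ x → p ∣ y → IsUnit p := fun p hp hpx hpy =>
    hgcd p hpx hpy (hp.dvd_of_pow_four_sub_pow_four_eq hpx hpy h)
  have hπxy := pi_dvd_iff_pi_dvd_of_pow_four_sub_pow_four_eq h
  have hx : ¬π ∣ x := fun hπx => prime_pi.not_isUnit (hcommon π prime_pi hπx (hπxy.mp hπx))
  have hxy : IsCoprime x y := isCoprime_of_prime_dvd (fun h0 => hx (h0.1 ▸ dvd_zero π))
    fun p hp hpx hpy => hp.not_isUnit (hcommon p hp hpx hpy)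
  obtain ⟨k, w, hw, rfl⟩ :=
    WfDvdMonoid.max_power_factor (right_ne_zero_of_mul hxyz) prime_pi.irreducible
  exact pow_four_sub_pow_four_ne_pi_pow_mul_sq hx (mt hπxy.mpr hx) hw hxy (by rw [h]; ring)
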